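/- The Mills ratio U(z) := Φ(−z)/φ(z) is infinitely differentiable on ℝ, strictly decreasing on ℝ, strictly convex on ℝ, and satisfies z² U′(z) → −1 as z → +∞ (i.e. U′(z) ~ −1/z² as z → ∞). -/

import Mathlib

open MeasureTheory Filter Topology

/-- Standard normal density `φ(z) = e^{-z²/2}/√(2π)`. -/
noncomputable def stdPDF (z : ℝ) : ℝ := Real.exp (-(z^2)/2) / Real.sqrt (2*Real.pi)

/-- Standard normal distribution function `Φ(z) = ∫_{-∞}^z φ(t) dt`. -/
noncomputable def stdCDF (z : ℝ) : ℝ := ∫ t in Set.Iic z, stdPDF t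

/-- Mills ratio `U(z) = Φ(-z)/φ(z)`. -/
noncomputable def mills (z : ℝ) : ℝ := stdCDF (-z) / stdPDF z

/-!
Since `φ' = -zφ` and `(Φ(-z))' = -φ(z)`, the Mills ratio solves `U' = zU - 1`, so
`U'' = (1 + z²)U - z` and `z²U' = z³U - z²`. Monotonicity, convexity and the asymptotics thus
follow from `zU < 1`, `z < (1 + z²)U` and, for `z > 0`, `z² - 1 < z³U < z² - 1 + 3/z²`.
Each of these says `0 < F(z)` for some `F = pΦ(-·) + qφ` with polynomials `p, q`. Such an `F`
tends to `0` at `+∞`, as `Φ(-z)` and `φ(z)` decay like `e^{-z}`, and `F'` is either `-Φ(-z)` or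
a negative multiple of an `F` already shown positive; so `F` decreases to `0` and is positive.
-/

open scoped ContDiff

lemma pos_of_strictAntiOn_Ici_of_tendsto_zero {f : ℝ → ℝ} {x : ℝ}
    (hf : StrictAntiOn f (Set.Ici x)) (hlim : Tendsto f atTop (𝓝 0)) : 0 < f x := by
  have h_next : 0 ≤ f (x + 1) := le_of_tendsto hlim <| by
    filter_upwards [eventually_ge_atTop (x + 1)] with y hy
    exact hf.antitoneOn (Set.mem_Ici.2 (by linarith)) (Set.mem_Ici.2 (by linarith)) hy
  exact h_next.trans_lt (hf Set.self_mem_Ici (Set.mem_Ici.2 (by linarith)) (lt_add_one x))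

lemma pos_of_hasDerivAt_neg_of_tendsto_zero {f f' : ℝ → ℝ} {x : ℝ}
    (hf : ∀ y, x ≤ y → HasDerivAt f (f' y) y) (hf' : ∀ y, x < y → f' y < 0)
    (hlim : Tendsto f atTop (𝓝 0)) : 0 < f x := by
  refine pos_of_strictAntiOn_Ici_of_tendsto_zero ?_ hlim
  refine strictAntiOn_of_deriv_neg (convex_Ici x)
    (fun y hy => (hf y hy).continuousAt.continuousWithinAt) fun y hy => ?_
  rw [interior_Ici] at hy
  rw [(hf y hy.le).deriv]
  exact hf' y hy

lemma tendsto_pow_mul_of_isBigO_exp_neg {g : ℝ → ℝ}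
    (hg : g =O[atTop] fun z => Real.exp (-z)) (n : ℕ) :
    Tendsto (fun z => z ^ n * g z) atTop (𝓝 0) :=
  ((Asymptotics.isBigO_refl (fun z : ℝ => z ^ n) atTop).mul hg).trans_tendsto
    (Real.tendsto_pow_mul_exp_neg_atTop_nhds_zero n)

lemma stdPDF_pos (z : ℝ) : 0 < stdPDF z :=
  div_pos (Real.exp_pos _) (Real.sqrt_pos.2 (by positivity))

lemma stdPDF_neg (z : ℝ) : stdPDF (-z) = stdPDF z := by
  simp [stdPDF]

lemma hasDerivAt_stdPDF (z : ℝ) : HasDerivAt stdPDF (-z * stdPDF z) z := by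
  have h_exponent : HasDerivAt (fun x : ℝ => -(x ^ 2) / 2) (-z) z :=
    (((hasDerivAt_pow 2 z).neg).div_const 2).congr_deriv (by ring)
  exact (h_exponent.exp.div_const _).congr_deriv (by unfold stdPDF; ring)

lemma contDiff_stdPDF : ContDiff ℝ ∞ stdPDF :=
  (Real.contDiff_exp.comp (((contDiff_id.pow 2).neg).div_const 2)).div_const _

lemma integrable_stdPDF : Integrable stdPDF := by
  refine ((integrable_exp_neg_mul_sq (by norm_num : (0 : ℝ) < 1 / 2)).div_const
    (Real.sqrt (2 * Real.pi))).congr (Eventually.of_forall fun x => ?_)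
  unfold stdPDF
  ring_nf

lemma stdPDF_le_exp_neg {z : ℝ} (hz : 2 ≤ z) :
    stdPDF z ≤ Real.exp (-z) / Real.sqrt (2 * Real.pi) := by
  unfold stdPDF
  gcongr
  nlinarith

lemma isBigO_stdPDF_exp_neg : stdPDF =O[atTop] fun z => Real.exp (-z) := by
  refine Asymptotics.IsBigO.of_bound (Real.sqrt (2 * Real.pi))⁻¹ ?_
  filter_upwards [eventually_ge_atTop 2] with z hz
  rw [Real.norm_of_nonneg (stdPDF_pos z).le, Real.norm_of_nonneg (Real.exp_pos _).le,
    inv_mul_eq_div]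
  exact stdPDF_le_exp_neg hz

lemma hasDerivAt_stdCDF (x : ℝ) : HasDerivAt stdCDF (stdPDF x) x := by
  have h_split : ∀ y, stdCDF y = stdCDF 0 + ∫ t in (0 : ℝ)..y, stdPDF t := fun y => by
    have := intervalIntegral.integral_Iic_sub_Iic (μ := volume) (a := 0) (b := y)
      integrable_stdPDF.integrableOn integrable_stdPDF.integrableOn
    unfold stdCDF
    linarith
  have h_ftc : HasDerivAt (fun y => ∫ t in (0 : ℝ)..y, stdPDF t) (stdPDF x) x :=
    intervalIntegral.integral_hasDerivAt_right integrable_stdPDF.intervalIntegrable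
      (contDiff_stdPDF.continuous.stronglyMeasurableAtFilter _ _)
      contDiff_stdPDF.continuous.continuousAt
  exact (h_ftc.const_add _).congr_of_eventuallyEq (Eventually.of_forall h_split)

lemma hasDerivAt_stdCDF_neg (z : ℝ) : HasDerivAt (fun x => stdCDF (-x)) (-stdPDF z) z := by
  simpa [stdPDF_neg, Function.comp_def] using (hasDerivAt_stdCDF (-z)).comp z (hasDerivAt_neg z)

lemma contDiff_stdCDF : ContDiff ℝ ∞ stdCDF := by
  rw [contDiff_infty_iff_deriv]
  refine ⟨fun x => (hasDerivAt_stdCDF x).differentiableAt, ?_⟩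
  rw [show deriv stdCDF = stdPDF from funext fun x => (hasDerivAt_stdCDF x).deriv]
  exact contDiff_stdPDF

lemma stdCDF_pos (x : ℝ) : 0 < stdCDF x := by
  unfold stdCDF
  have h_supp : Function.support stdPDF ∩ Set.Iic x = Set.Iic x :=
    Set.inter_eq_right.2 fun t _ => (stdPDF_pos t).ne'
  rw [setIntegral_pos_iff_support_of_nonneg_ae
    (Eventually.of_forall fun t => (stdPDF_pos t).le) integrable_stdPDF.integrableOn,
    h_supp, Real.volume_Iic]
  exact ENNReal.zero_lt_top

lemma stdCDF_le_exp {x : ℝ} (hx : x ≤ -2) :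
    stdCDF x ≤ Real.exp x / Real.sqrt (2 * Real.pi) := by
  calc stdCDF x ≤ ∫ t in Set.Iic x, Real.exp t / Real.sqrt (2 * Real.pi) := by
        refine setIntegral_mono_on integrable_stdPDF.integrableOn
          ((integrableOn_exp_Iic x).div_const _) measurableSet_Iic fun t ht => ?_
        simpa [stdPDF_neg] using stdPDF_le_exp_neg (z := -t) (by linarith [Set.mem_Iic.1 ht])
    _ = Real.exp x / Real.sqrt (2 * Real.pi) := by rw [integral_div, integral_exp_Iic]

lemma isBigO_stdCDF_neg_exp_neg : (fun z => stdCDF (-z)) =O[atTop] fun z => Real.exp (-z) := by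
  refine Asymptotics.IsBigO.of_bound (Real.sqrt (2 * Real.pi))⁻¹ ?_
  filter_upwards [eventually_ge_atTop 2] with z hz
  rw [Real.norm_of_nonneg (stdCDF_pos _).le, Real.norm_of_nonneg (Real.exp_pos _).le,
    inv_mul_eq_div]
  exact stdCDF_le_exp (by linarith)

lemma tendsto_pow_mul_stdPDF (n : ℕ) : Tendsto (fun z => z ^ n * stdPDF z) atTop (𝓝 0) :=
  tendsto_pow_mul_of_isBigO_exp_neg isBigO_stdPDF_exp_neg n

lemma tendsto_pow_mul_stdCDF_neg (n : ℕ) :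
    Tendsto (fun z => z ^ n * stdCDF (-z)) atTop (𝓝 0) :=
  tendsto_pow_mul_of_isBigO_exp_neg isBigO_stdCDF_neg_exp_neg n

lemma mul_mills_lt_iff {a b z : ℝ} : a * mills z < b ↔ a * stdCDF (-z) < b * stdPDF z := by
  rw [mills, mul_div_assoc', div_lt_iff₀ (stdPDF_pos z)]

lemma lt_mul_mills_iff {a b z : ℝ} : b < a * mills z ↔ b * stdPDF z < a * stdCDF (-z) := by
  rw [mills, mul_div_assoc', lt_div_iff₀ (stdPDF_pos z)]

lemma mul_mills_lt_one (z : ℝ) : z * mills z < 1 := by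
  rw [mul_mills_lt_iff, one_mul, ← sub_pos]
  refine pos_of_hasDerivAt_neg_of_tendsto_zero (f := fun w => stdPDF w - w * stdCDF (-w))
    (f' := fun w => -stdCDF (-w))
    (fun w _ => ?_) (fun w _ => neg_neg_of_pos (stdCDF_pos _)) ?_
  · exact ((hasDerivAt_stdPDF w).sub ((hasDerivAt_id' w).mul (hasDerivAt_stdCDF_neg w))).congr_deriv
      (by ring)
  · simpa using (tendsto_pow_mul_stdPDF 0).sub (tendsto_pow_mul_stdCDF_neg 1)

lemma lt_one_add_sq_mul_mills (z : ℝ) : z < (1 + z ^ 2) * mills z := by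
  rw [lt_mul_mills_iff, ← sub_pos]
  refine pos_of_hasDerivAt_neg_of_tendsto_zero
    (f := fun w => (1 + w ^ 2) * stdCDF (-w) - w * stdPDF w)
    (f' := fun w => 2 * (w * stdCDF (-w) - stdPDF w)) (fun w _ => ?_) (fun w _ => ?_) ?_
  · exact ((((hasDerivAt_pow 2 w).const_add 1).mul (hasDerivAt_stdCDF_neg w)).sub
      ((hasDerivAt_id' w).mul (hasDerivAt_stdPDF w))).congr_deriv (by ring)
  · have := mul_mills_lt_iff.1 (mul_mills_lt_one w)
    linarith
  · simpa [add_mul] using ((tendsto_pow_mul_stdCDF_neg 0).add (tendsto_pow_mul_stdCDF_neg 2)).sub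
      (tendsto_pow_mul_stdPDF 1)

lemma sq_sub_one_lt_pow_three_mul_mills {z : ℝ} (hz : 0 < z) : z ^ 2 - 1 < z ^ 3 * mills z := by
  rw [lt_mul_mills_iff, ← sub_pos]
  refine pos_of_hasDerivAt_neg_of_tendsto_zero
    (f := fun w => w ^ 3 * stdCDF (-w) - (w ^ 2 - 1) * stdPDF w)
    (f' := fun w => -(3 * w) * (stdPDF w - w * stdCDF (-w))) (fun w _ => ?_) (fun w hw => ?_) ?_
  · exact (((hasDerivAt_pow 3 w).mul (hasDerivAt_stdCDF_neg w)).sub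
      (((hasDerivAt_pow 2 w).sub_const 1).mul (hasDerivAt_stdPDF w))).congr_deriv (by ring)
  · have := mul_mills_lt_iff.1 (mul_mills_lt_one w)
    nlinarith
  · simpa [sub_mul] using (tendsto_pow_mul_stdCDF_neg 3).sub
      ((tendsto_pow_mul_stdPDF 2).sub (tendsto_pow_mul_stdPDF 0))

lemma pow_five_mul_mills_lt {z : ℝ} (hz : 0 < z) : z ^ 5 * mills z < z ^ 4 - z ^ 2 + 3 := by
  rw [mul_mills_lt_iff, ← sub_pos]
  refine pos_of_hasDerivAt_neg_of_tendsto_zero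
    (f := fun w => (w ^ 4 - w ^ 2 + 3) * stdPDF w - w ^ 5 * stdCDF (-w))
    (f' := fun w => -(5 * w) * (w ^ 3 * stdCDF (-w) - (w ^ 2 - 1) * stdPDF w))
    (fun w _ => ?_) (fun w hw => ?_) ?_
  · exact (((((hasDerivAt_pow 4 w).sub (hasDerivAt_pow 2 w)).add_const 3).mul
      (hasDerivAt_stdPDF w)).sub ((hasDerivAt_pow 5 w).mul (hasDerivAt_stdCDF_neg w))).congr_deriv
      (by simp only [Pi.sub_apply]; ring)
  · have := lt_mul_mills_iff.1 (sq_sub_one_lt_pow_three_mul_mills (hz.trans hw))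
    nlinarith
  · simpa [sub_mul, add_mul] using (((tendsto_pow_mul_stdPDF 4).sub (tendsto_pow_mul_stdPDF 2)).add
      ((tendsto_pow_mul_stdPDF 0).const_mul 3)).sub (tendsto_pow_mul_stdCDF_neg 5)

lemma hasDerivAt_mills (z : ℝ) : HasDerivAt mills (z * mills z - 1) z := by
  refine ((hasDerivAt_stdCDF_neg z).div (hasDerivAt_stdPDF z) (stdPDF_pos z).ne').congr_deriv ?_
  have := (stdPDF_pos z).ne'
  unfold mills
  field_simp
  ring

lemma deriv_mills : deriv mills = fun z => z * mills z - 1 :=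
  funext fun z => (hasDerivAt_mills z).deriv

lemma contDiff_mills : ContDiff ℝ ∞ mills :=
  (contDiff_stdCDF.comp contDiff_neg).div contDiff_stdPDF fun z => (stdPDF_pos z).ne'

lemma strictAnti_mills : StrictAnti mills :=
  strictAnti_of_deriv_neg fun z => by
    rw [deriv_mills]
    linarith [mul_mills_lt_one z]

lemma strictConvexOn_mills : StrictConvexOn ℝ Set.univ mills := by
  refine StrictMono.strictConvexOn_univ_of_deriv contDiff_mills.continuous ?_
  rw [deriv_mills]
  refine strictMono_of_deriv_pos fun z => ?_
  have h_deriv2 : HasDerivAt (fun z => z * mills z - 1) ((1 + z ^ 2) * mills z - z) z :=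
    (((hasDerivAt_id' z).mul (hasDerivAt_mills z)).sub_const 1).congr_deriv (by ring)
  rw [h_deriv2.deriv]
  linarith [lt_one_add_sq_mul_mills z]

lemma tendsto_sq_mul_deriv_mills : Tendsto (fun z => z ^ 2 * deriv mills z) atTop (𝓝 (-1)) := by
  have h_upper : Tendsto (fun z : ℝ => -1 + 3 / z ^ 2) atTop (𝓝 (-1)) := by
    simpa using tendsto_const_nhds.add
      (tendsto_const_nhds.div_atTop (tendsto_pow_atTop two_ne_zero) : Tendsto _ _ (𝓝 (0 : ℝ)))
  refine tendsto_of_tendsto_of_tendsto_of_le_of_le' tendsto_const_nhds h_upper ?_ ?_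
  all_goals
    filter_upwards [eventually_gt_atTop (0 : ℝ)] with z hz
    rw [deriv_mills]
  · linarith [sq_sub_one_lt_pow_three_mul_mills hz]
  · calc z ^ 2 * (z * mills z - 1) = -1 + (z ^ 5 * mills z - z ^ 4 + z ^ 2) / z ^ 2 := by
          field_simp
          ring
      _ ≤ -1 + 3 / z ^ 2 := by
          gcongr
          linarith [pow_five_mul_mills_lt hz]

/-- **Properties of the Mills ratio.** `U` is infinitely differentiable, strictly
decreasing, strictly convex, and `U'(z) ~ -1/z²` as `z → ∞`
(i.e. `z² U'(z) → -1`). -/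
theorem mills_ratio_properties :
    (∀ n : ℕ, ContDiff ℝ n mills) ∧
    StrictAnti mills ∧
    StrictConvexOn ℝ Set.univ mills ∧
    Tendsto (fun z => z ^ 2 * deriv mills z) atTop (𝓝 (-1)) :=
  ⟨fun _ => contDiff_mills.of_le (by exact_mod_cast le_top), strictAnti_mills,
    strictConvexOn_mills, tendsto_sq_mul_deriv_mills⟩
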